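/- arXiv:2305.02072 — 2 statements merged into one kernel-verified Lean document; each statement's English description precedes it below -/
import Mathlib

section
/- Let A = (α,β/K) be a division quaternion algebra over a field K. Every monic non-constant polynomial 𝔭 ∈ A[X] can be expressed as a product of irreducible polynomials of A[X], and any two factorizations of 𝔭 into products of non-constant irreducible polynomials have the same number of factors. -/
open Polynomial Quaternion

section OreAux

variable {D : Type*} [DivisionRing D]

/-- Left division by a monic polynomial over a division ring:
`f = d * g + r` with `deg r < deg g`. -/
theorem Ore.left_div_monic (g : D[X]) (hg : g.Monic) :
    ∀ (n : ℕ) (f : D[X]), f.natDegree ≤ n →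
      ∃ d r : D[X], f = d * g + r ∧ r.degree < g.degree := by
  intro n
  induction n using Nat.strong_induction_on with
  | _ n ih =>
    intro f hf
    by_cases hlt : f.degree < g.degree
    · exact ⟨0, f, by simp, hlt⟩
    push_neg at hlt
    have hf0 : f ≠ 0 := by
      rintro rfl
      simp only [degree_zero, le_bot_iff, degree_eq_bot] at hlt
      exact hg.ne_zero hlt
    have hdle : g.natDegree ≤ f.natDegree := natDegree_le_natDegree hlt
    set a := f.leadingCoeff with ha
    have ha0 : a ≠ 0 := leadingCoeff_ne_zero.mpr hf0
    set m := f.natDegree - g.natDegree with hm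
    set z : D[X] := C a * X ^ m with hz
    have hzg : (z * g).degree = f.degree := by
      rw [degree_mul, degree_C_mul_X_pow m ha0, degree_eq_natDegree hg.ne_zero,
        degree_eq_natDegree hf0, ← Nat.cast_add, tsub_add_cancel_of_le hdle]
    have hlc : f.leadingCoeff = (z * g).leadingCoeff := by
      rw [leadingCoeff_mul, hg.leadingCoeff, mul_one, hz, leadingCoeff_C_mul_X_pow]
    have hdeglt : (f - z * g).degree < f.degree := degree_sub_lt hzg.symm hf0 hlc
    by_cases hf' : f - z * g = 0
    · refine ⟨z, 0, ?_, by simpa only [degree_zero, bot_lt_iff_ne_bot, Ne,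
        degree_eq_bot] using hg.ne_zero⟩
      rw [add_zero, ← sub_eq_zero, hf']
    · have hn : (f - z * g).natDegree < n :=
        lt_of_lt_of_le (natDegree_lt_natDegree hf' hdeglt) hf
      obtain ⟨d', r', h1, h2⟩ := ih _ hn (f - z * g) le_rfl
      refine ⟨z + d', r', ?_, h2⟩
      rw [add_mul, add_assoc, ← h1, add_sub_cancel]

theorem Ore.degree_eq_zero_of_isUnit {p : D[X]} (h : IsUnit p) : p.degree = 0 := by
  obtain ⟨u, rfl⟩ := h
  have h1 : ((u : D[X]) * ↑u⁻¹).degree = 0 := by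
    rw [Units.mul_inv, degree_one]
  rw [degree_mul] at h1
  exact ((Nat.WithBot.add_eq_zero_iff ..).mp h1).1

theorem Ore.isUnit_of_degree_eq_zero {p : D[X]} (h : p.degree = 0) : IsUnit p := by
  have h0 : p ≠ 0 := fun hp => by simp [hp] at h
  rw [eq_C_of_degree_le_zero h.le]
  refine (isUnit_iff_ne_zero.mpr ?_ : IsUnit (p.coeff 0)).map Polynomial.C
  intro hc
  apply h0
  have := eq_C_of_degree_le_zero h.le
  rwa [hc, map_zero] at this

/-- Every left ideal of `D[X]` is principal. -/
theorem Ore.submodule_principal (I : Submodule D[X] D[X]) :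
    ∃ g : D[X], I = Submodule.span D[X] {g} := by
  by_cases hI : I = ⊥
  · exact ⟨0, by rw [hI, Submodule.span_zero_singleton]⟩
  obtain ⟨b, hbI, hb0⟩ := Submodule.exists_mem_ne_zero_of_ne_bot hI
  set S : Set ℕ := {n | ∃ p, p ∈ I ∧ p ≠ 0 ∧ p.natDegree = n} with hS
  have hSne : S.Nonempty := ⟨b.natDegree, b, hbI, hb0, rfl⟩
  obtain ⟨p, hpI, hp0, hpdeg⟩ := Nat.sInf_mem hSne
  set g : D[X] := C p.leadingCoeff⁻¹ * p with hgdef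
  have hlc0 : p.leadingCoeff ≠ 0 := leadingCoeff_ne_zero.mpr hp0
  have hgI : g ∈ I := by
    simpa [hgdef, smul_eq_mul] using I.smul_mem (C p.leadingCoeff⁻¹) hpI
  have hgm : g.Monic := by
    rw [Monic, hgdef, leadingCoeff_mul, leadingCoeff_C, inv_mul_cancel₀ hlc0]
  have hgdeg : g.natDegree = p.natDegree := by
    rw [hgdef, natDegree_mul (by simpa using inv_ne_zero hlc0) hp0, natDegree_C, zero_add]
  refine ⟨g, le_antisymm ?_ ?_⟩
  · intro f hfI
    obtain ⟨d, r, h1, h2⟩ := Ore.left_div_monic g hgm f.natDegree f le_rfl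
    have hrI : r ∈ I := by
      have : r = f - d * g := by rw [h1, add_sub_cancel_left]
      rw [this]
      exact I.sub_mem hfI (by simpa [smul_eq_mul] using I.smul_mem d hgI)
    by_cases hr0 : r = 0
    · rw [Submodule.mem_span_singleton]
      exact ⟨d, by rw [smul_eq_mul, h1, hr0, add_zero]⟩
    · exfalso
      have hlt : r.natDegree < g.natDegree := natDegree_lt_natDegree hr0 h2
      have : sInf S ≤ r.natDegree := Nat.sInf_le ⟨r, hrI, hr0, rfl⟩
      omega
  · rw [Submodule.span_singleton_le_iff_mem]
    exact hgI

/-- For `q` irreducible and `g ≠ 0`, the left ideal `D[X]·(q*g)` is maximal in `D[X]·g`. -/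
theorem Ore.span_covby_span {q g : D[X]} (hq : Irreducible q) (hg : g ≠ 0) :
    Submodule.span D[X] {q * g} ⋖ Submodule.span D[X] {g} := by
  have hq0 : q ≠ 0 := hq.ne_zero
  have hdegq : q.degree ≠ 0 := fun h => hq.not_isUnit (Ore.isUnit_of_degree_eq_zero h)
  constructor
  · refine lt_of_le_of_ne ?_ ?_
    · rw [Submodule.span_singleton_le_iff_mem, Submodule.mem_span_singleton]
      exact ⟨q, rfl⟩
    · intro heq
      have : g ∈ Submodule.span D[X] {q * g} := by
        rw [heq]; exact Submodule.mem_span_singleton_self g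
      rw [Submodule.mem_span_singleton] at this
      obtain ⟨h, hh⟩ := this
      rw [smul_eq_mul, ← mul_assoc] at hh
      have : h * q = 1 := mul_right_cancel₀ hg (hh.trans (one_mul g).symm)
      have hdeg : (h * q).degree = 0 := by rw [this, degree_one]
      rw [degree_mul] at hdeg
      exact hdegq ((Nat.WithBot.add_eq_zero_iff ..).mp hdeg).2
  · intro J h1 h2
    obtain ⟨e, rfl⟩ := Ore.submodule_principal J
    have he_mem : e ∈ Submodule.span D[X] {g} :=
      h2.le (Submodule.mem_span_singleton_self e)
    rw [Submodule.mem_span_singleton] at he_mem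
    obtain ⟨h, hh⟩ := he_mem
    rw [smul_eq_mul] at hh
    have hqg_mem : q * g ∈ Submodule.span D[X] {e} :=
      h1.le (Submodule.mem_span_singleton_self (q * g))
    rw [Submodule.mem_span_singleton] at hqg_mem
    obtain ⟨c, hc⟩ := hqg_mem
    rw [smul_eq_mul, ← hh, ← mul_assoc] at hc
    have hch : c * h = q := mul_right_cancel₀ hg hc
    rcases hq.isUnit_or_isUnit hch.symm with hcu | hhu
    · obtain ⟨u, rfl⟩ := hcu
      have : e ∈ Submodule.span D[X] {q * g} := by
        rw [Submodule.mem_span_singleton]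
        refine ⟨(↑u⁻¹ : D[X]), ?_⟩
        rw [smul_eq_mul, ← hc, ← mul_assoc, ← mul_assoc, Units.inv_mul, one_mul, hh]
      exact absurd ((Submodule.span_singleton_le_iff_mem ..).mpr this) (not_le_of_gt h1)
    · obtain ⟨u, rfl⟩ := hhu
      have : g ∈ Submodule.span D[X] {e} := by
        rw [Submodule.mem_span_singleton]
        exact ⟨(↑u⁻¹ : D[X]), by rw [smul_eq_mul, ← hh, ← mul_assoc, Units.inv_mul, one_mul]⟩
      exact absurd ((Submodule.span_singleton_le_iff_mem ..).mpr this) (not_le_of_gt h2)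

/-- Existence of a factorization into irreducibles. -/
theorem Ore.exists_irred_factorization :
    ∀ (n : ℕ) (p : D[X]), ¬ IsUnit p → p ≠ 0 → p.natDegree ≤ n →
      ∃ l : List D[X], (∀ q ∈ l, Irreducible q) ∧ p = l.prod := by
  intro n
  induction n using Nat.strong_induction_on with
  | _ n ih =>
    intro p hpu hp0 hpn
    by_cases hirr : Irreducible p
    · exact ⟨[p], by simp [hirr], by simp⟩
    rw [irreducible_iff] at hirr
    push_neg at hirr
    obtain ⟨a, b, hab, hau, hbu⟩ := hirr hpu
    have ha0 : a ≠ 0 := by rintro rfl; simp [hab] at hp0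
    have hb0 : b ≠ 0 := by rintro rfl; simp [hab] at hp0
    have had : 0 < a.natDegree := by
      rcases Nat.eq_zero_or_pos a.natDegree with h | h
      · exact absurd (Ore.isUnit_of_degree_eq_zero
          (by rw [degree_eq_natDegree ha0, h]; rfl)) hau
      · exact h
    have hbd : 0 < b.natDegree := by
      rcases Nat.eq_zero_or_pos b.natDegree with h | h
      · exact absurd (Ore.isUnit_of_degree_eq_zero
          (by rw [degree_eq_natDegree hb0, h]; rfl)) hbu
      · exact h
    have hsum : p.natDegree = a.natDegree + b.natDegree := by
      rw [hab, natDegree_mul ha0 hb0]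
    obtain ⟨la, hla, hlaprod⟩ := ih a.natDegree (by omega) a hau ha0 le_rfl
    obtain ⟨lb, hlb, hlbprod⟩ := ih b.natDegree (by omega) b hbu hb0 le_rfl
    refine ⟨la ++ lb, ?_, ?_⟩
    · intro q hq
      rcases List.mem_append.mp hq with h | h
      exacts [hla q h, hlb q h]
    · rw [List.prod_append, hab, hlaprod, hlbprod]

/-- Uniqueness of the number of irreducible factors, via Jordan–Hölder. -/
theorem Ore.factorization_length_eq {p : D[X]} (l₁ l₂ : List D[X])
    (h₁ : ∀ q ∈ l₁, Irreducible q) (h₂ : ∀ q ∈ l₂, Irreducible q)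
    (e₁ : p = l₁.prod) (e₂ : p = l₂.prod) : l₁.length = l₂.length := by
  have series : ∀ (l : List D[X]), (∀ q ∈ l, Irreducible q) →
      ∃ s : CompositionSeries (Submodule D[X] D[X]),
        s.length = l.length ∧ s.head = Submodule.span D[X] {l.prod} ∧ s.last = ⊤ := by
    intro l hl
    refine ⟨⟨l.length, fun i => Submodule.span D[X] {(l.drop i).prod}, ?_⟩, rfl, ?_, ?_⟩
    · intro i
      show Submodule.span D[X] {(l.drop (Fin.castSucc i)).prod} ⋖
        Submodule.span D[X] {(l.drop i.succ).prod}
      have hdrop : l.drop (Fin.castSucc i) = l[i.val] :: l.drop (i.val + 1) := by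
        rw [Fin.coe_castSucc]
        exact List.drop_eq_getElem_cons i.isLt
      rw [hdrop, List.prod_cons, Fin.val_succ]
      refine Ore.span_covby_span (hl _ (List.getElem_mem _)) (List.prod_ne_zero ?_)
      intro h0
      exact (hl 0 (List.mem_of_mem_drop h0)).ne_zero rfl
    · show Submodule.span D[X] {(l.drop 0).prod} = _
      rw [List.drop_zero]
    · show Submodule.span D[X] {(l.drop l.length).prod} = ⊤
      rw [List.drop_length, List.prod_nil]
      exact Ideal.span_singleton_one
  obtain ⟨s₁, hlen₁, hhead₁, hlast₁⟩ := series l₁ h₁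
  obtain ⟨s₂, hlen₂, hhead₂, hlast₂⟩ := series l₂ h₂
  obtain ⟨f, -⟩ := CompositionSeries.jordan_holder s₁ s₂
    (by rw [hhead₁, hhead₂, ← e₁, ← e₂]) (by rw [hlast₁, hlast₂])
  rw [← hlen₁, ← hlen₂]
  simpa using Fintype.card_congr f

end OreAux

/-- **Ore.** Let `A = (α,β/K)` be a division quaternion algebra over a field `K`.
Every monic non-constant polynomial `𝔭 ∈ A[X]` is a product of irreducible polynomials of
`A[X]`, and any two factorizations of `𝔭` into products of non-constant irreducible polynomials
have the same number of factors. -/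
theorem factorization_exists_and_length_unique {K : Type*} [Field K] (α β : K)
    (hα : α ≠ 0) (hβ : β ≠ 0)
    (hdiv : ∀ x : ℍ[K,α,β], x ≠ 0 → IsUnit x)
    (𝔭 : Polynomial ℍ[K,α,β]) (hm : 𝔭.Monic) (hdeg : 0 < 𝔭.degree) :
    (∃ l : List (Polynomial ℍ[K,α,β]), (∀ q ∈ l, Irreducible q) ∧ 𝔭 = l.prod) ∧
    ∀ l₁ l₂ : List (Polynomial ℍ[K,α,β]),
      (∀ q ∈ l₁, Irreducible q ∧ 0 < q.degree) →
      (∀ q ∈ l₂, Irreducible q ∧ 0 < q.degree) →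
      𝔭 = l₁.prod → 𝔭 = l₂.prod → l₁.length = l₂.length := by
  letI : DivisionRing ℍ[K,α,β] := DivisionRing.ofIsUnitOrEqZero fun a => by
    by_cases h : a = 0
    · exact Or.inr h
    · exact Or.inl (hdiv a h)
  have hp0 : 𝔭 ≠ 0 := hm.ne_zero
  have hpu : ¬ IsUnit 𝔭 := fun h =>
    lt_irrefl _ ((Ore.degree_eq_zero_of_isUnit h) ▸ hdeg)
  constructor
  · exact Ore.exists_irred_factorization 𝔭.natDegree 𝔭 hpu hp0 le_rfl
  · intro l₁ l₂ hl₁ hl₂ e₁ e₂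
    exact Ore.factorization_length_eq l₁ l₂ (fun q hq => (hl₁ q hq).1)
      (fun q hq => (hl₂ q hq).1) e₁ e₂
end

section
/- Let A = (α,β/K) be a division quaternion algebra over a field K. Every nonzero polynomial 𝔭 ∈ A[X] can be expressed uniquely as a product 𝔭 = c·𝔮·p, where c ∈ A is the leading coefficient of 𝔭, p ∈ K[X] is a monic polynomial with coefficients in K, and 𝔮 ∈ A[X] is a monic polynomial not divisible by any non-constant polynomial from K[X]. Moreover, writing 𝔭 = p₀ + p₁·i + p₂·j + p₃·k with p₀, p₁, p₂, p₃ ∈ K[X] (coordinates of 𝔭 in the basis {1, i, j, k} of A[X] as a free K[X]-module), p is the greatest common divisor in K[X] of p₀, p₁, p₂, p₃. -/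
open Polynomial Quaternion

/-- The coordinate polynomial of a quaternionic polynomial `𝔭 = Σ aᵢ Xⁱ` along a coordinate
function `f : A → K` (e.g. `re`, `imI`, `imJ`, `imK`): `coordPoly f 𝔭 = Σ f(aᵢ) Xⁱ`. -/
noncomputable def coordPoly {K : Type*} [Field K] {α β : K}
    (f : ℍ[K,α,β] → K) (𝔭 : Polynomial ℍ[K,α,β]) : K[X] :=
  𝔭.sum fun n a => Polynomial.C (f a) * Polynomial.X ^ n

section BeckAux

variable {K : Type*} [Field K] {α β : K}

private lemma coordPoly_coeff {f : ℍ[K,α,β] → K} (hf : f 0 = 0)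
    (𝔭 : Polynomial ℍ[K,α,β]) (n : ℕ) :
    (coordPoly f 𝔭).coeff n = f (𝔭.coeff n) := by
  rw [coordPoly, Polynomial.coeff_sum, Polynomial.sum_def]
  simp only [Polynomial.coeff_C_mul, Polynomial.coeff_X_pow, mul_ite, mul_one, mul_zero]
  rw [Finset.sum_ite_eq 𝔭.support n fun k => f (𝔭.coeff k)]
  split_ifs with h
  · rfl
  · rw [Polynomial.notMem_support_iff.mp h, hf]

/-- A "coordinate function" : the four quaternion coordinates satisfy this. -/
private def IsCoordFn (f : ℍ[K,α,β] → K) : Prop :=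
  f 0 = 0 ∧ (∀ x y, f (x + y) = f x + f y) ∧
    ∀ x t, f (x * algebraMap K ℍ[K,α,β] t) = f x * t

private lemma isCoordFn_re : IsCoordFn (fun x : ℍ[K,α,β] => x.re) :=
  ⟨rfl, fun _ _ => rfl, fun x t => by simp [QuaternionAlgebra.coe_algebraMap]⟩

private lemma isCoordFn_imI : IsCoordFn (fun x : ℍ[K,α,β] => x.imI) :=
  ⟨rfl, fun _ _ => rfl, fun x t => by simp [QuaternionAlgebra.coe_algebraMap]⟩

private lemma isCoordFn_imJ : IsCoordFn (fun x : ℍ[K,α,β] => x.imJ) :=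
  ⟨rfl, fun _ _ => rfl, fun x t => by simp [QuaternionAlgebra.coe_algebraMap]⟩

private lemma isCoordFn_imK : IsCoordFn (fun x : ℍ[K,α,β] => x.imK) :=
  ⟨rfl, fun _ _ => rfl, fun x t => by simp [QuaternionAlgebra.coe_algebraMap]⟩

/-- Multiplying on the right by a central (scalar) polynomial multiplies each coordinate
polynomial. -/
private lemma coordPoly_mul_map {f : ℍ[K,α,β] → K} (hf : IsCoordFn f)
    (𝔥 : Polynomial ℍ[K,α,β]) (g : K[X]) :
    coordPoly f (𝔥 * g.map (algebraMap K ℍ[K,α,β])) = coordPoly f 𝔥 * g := by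
  obtain ⟨hf0, hadd, hsm⟩ := hf
  ext n
  rw [coordPoly_coeff hf0, Polynomial.coeff_mul, Polynomial.coeff_mul]
  have hs := map_sum (AddMonoidHom.mk' f hadd)
    (fun x : ℕ × ℕ => 𝔥.coeff x.1 * (g.map (algebraMap K ℍ[K,α,β])).coeff x.2)
    (Finset.HasAntidiagonal.antidiagonal n)
  have hterm : ∀ x : ℕ × ℕ, f (𝔥.coeff x.1 * (g.map (algebraMap K ℍ[K,α,β])).coeff x.2)
      = (coordPoly f 𝔥).coeff x.1 * g.coeff x.2 := fun x => by
    rw [Polynomial.coeff_map, hsm, coordPoly_coeff hf0]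
  exact hs.trans (Finset.sum_congr rfl fun x _ => hterm x)

private lemma quat_decomp (a : ℍ[K,α,β]) :
    a = (algebraMap K ℍ[K,α,β] a.re) + (⟨0,1,0,0⟩ : ℍ[K,α,β]) * (algebraMap K ℍ[K,α,β] a.imI)
      + (⟨0,0,1,0⟩ : ℍ[K,α,β]) * (algebraMap K ℍ[K,α,β] a.imJ)
      + (⟨0,0,0,1⟩ : ℍ[K,α,β]) * (algebraMap K ℍ[K,α,β] a.imK) := by
  ext <;> simp [QuaternionAlgebra.coe_algebraMap]

/-- Reconstruction of a quaternionic polynomial from its coordinate polynomials. -/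
private lemma reconstruct (𝔭 : Polynomial ℍ[K,α,β]) :
    𝔭 = (coordPoly (fun x => x.re) 𝔭).map (algebraMap K ℍ[K,α,β])
      + Polynomial.C (⟨0,1,0,0⟩ : ℍ[K,α,β]) *
          (coordPoly (fun x => x.imI) 𝔭).map (algebraMap K ℍ[K,α,β])
      + Polynomial.C (⟨0,0,1,0⟩ : ℍ[K,α,β]) *
          (coordPoly (fun x => x.imJ) 𝔭).map (algebraMap K ℍ[K,α,β])
      + Polynomial.C (⟨0,0,0,1⟩ : ℍ[K,α,β]) *
          (coordPoly (fun x => x.imK) 𝔭).map (algebraMap K ℍ[K,α,β]) := by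
  refine Polynomial.ext fun n => ?_
  simp only [Polynomial.coeff_add, Polynomial.coeff_C_mul, Polynomial.coeff_map,
    coordPoly_coeff isCoordFn_re.1, coordPoly_coeff isCoordFn_imI.1,
    coordPoly_coeff isCoordFn_imJ.1, coordPoly_coeff isCoordFn_imK.1]
  exact quat_decomp (𝔭.coeff n)

/-- The main divisibility bridge: a central polynomial `g` right-divides `𝔭` iff it divides all
four coordinate polynomials. -/
private lemma factor_iff_dvd_coords (g : K[X]) (𝔭 : Polynomial ℍ[K,α,β]) :
    (∃ 𝔥 : Polynomial ℍ[K,α,β], 𝔭 = 𝔥 * g.map (algebraMap K ℍ[K,α,β])) ↔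
      (g ∣ coordPoly (fun x => x.re) 𝔭 ∧ g ∣ coordPoly (fun x => x.imI) 𝔭 ∧
        g ∣ coordPoly (fun x => x.imJ) 𝔭 ∧ g ∣ coordPoly (fun x => x.imK) 𝔭) := by
  constructor
  · rintro ⟨𝔥, rfl⟩
    exact ⟨⟨_, (coordPoly_mul_map isCoordFn_re 𝔥 g).trans (mul_comm _ _)⟩,
      ⟨_, (coordPoly_mul_map isCoordFn_imI 𝔥 g).trans (mul_comm _ _)⟩,
      ⟨_, (coordPoly_mul_map isCoordFn_imJ 𝔥 g).trans (mul_comm _ _)⟩,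
      ⟨_, (coordPoly_mul_map isCoordFn_imK 𝔥 g).trans (mul_comm _ _)⟩⟩
  · rintro ⟨⟨q0, h0⟩, ⟨q1, h1⟩, ⟨q2, h2⟩, ⟨q3, h3⟩⟩
    refine ⟨q0.map (algebraMap K ℍ[K,α,β])
      + Polynomial.C (⟨0,1,0,0⟩ : ℍ[K,α,β]) * q1.map (algebraMap K ℍ[K,α,β])
      + Polynomial.C (⟨0,0,1,0⟩ : ℍ[K,α,β]) * q2.map (algebraMap K ℍ[K,α,β])
      + Polynomial.C (⟨0,0,0,1⟩ : ℍ[K,α,β]) * q3.map (algebraMap K ℍ[K,α,β]), ?_⟩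
    conv_lhs => rw [reconstruct 𝔭]
    rw [h0, h1, h2, h3]
    simp only [mul_comm g, Polynomial.map_mul]
    noncomm_ring

end BeckAux

section GcdAux

variable {K : Type*} [Field K] [DecidableEq K]

private lemma gcd_congr_right {a b b' : K[X]} (h : Associated b b') :
    Associated (gcd a b) (gcd a b') :=
  associated_of_dvd_dvd
    (dvd_gcd (gcd_dvd_left _ _) ((gcd_dvd_right _ _).trans h.dvd))
    (dvd_gcd (gcd_dvd_left _ _) ((gcd_dvd_right _ _).trans h.symm.dvd))

private lemma gcd4_mul_right (a b c d p : K[X]) :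
    Associated (gcd (a * p) (gcd (b * p) (gcd (c * p) (d * p))))
      (gcd a (gcd b (gcd c d)) * p) := by
  have h1 : Associated (gcd (c * p) (d * p)) (gcd c d * p) := gcd_mul_right' p c d
  have h2 : Associated (gcd (b * p) (gcd (c * p) (d * p))) (gcd b (gcd c d) * p) :=
    (gcd_congr_right h1).trans (gcd_mul_right' p b (gcd c d))
  exact (gcd_congr_right h2).trans (gcd_mul_right' p a (gcd b (gcd c d)))

private lemma unit_mul_associated {d p : K[X]} (h : IsUnit d) : Associated (d * p) p :=
  by simpa using Associated.mul_right (associated_one_iff_isUnit.mpr h) p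

end GcdAux

section CoordGcd

variable {K : Type*} [Field K] {α β : K} [DecidableEq K]

private lemma coordGcd_isUnit {𝔮 : Polynomial ℍ[K,α,β]} (hm : 𝔮.Monic)
    (hnd : ∀ f : K[X], 0 < f.degree →
      ¬∃ 𝔥 : Polynomial ℍ[K,α,β], 𝔮 = 𝔥 * f.map (algebraMap K ℍ[K,α,β])) :
    IsUnit (gcd (coordPoly (fun x => x.re) 𝔮) (gcd (coordPoly (fun x => x.imI) 𝔮)
      (gcd (coordPoly (fun x => x.imJ) 𝔮) (coordPoly (fun x => x.imK) 𝔮)))) := by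
  set d := gcd (coordPoly (fun x => x.re) 𝔮) (gcd (coordPoly (fun x => x.imI) 𝔮)
      (gcd (coordPoly (fun x => x.imJ) 𝔮) (coordPoly (fun x => x.imK) 𝔮))) with hd
  by_contra hu
  have hd0 : d ≠ 0 := by
    intro h
    rw [hd, gcd_eq_zero_iff] at h
    obtain ⟨h0, h1⟩ := h
    rw [gcd_eq_zero_iff] at h1
    obtain ⟨h1, h2⟩ := h1
    rw [gcd_eq_zero_iff] at h2
    obtain ⟨h2, h3⟩ := h2
    have := reconstruct 𝔮
    rw [h0, h1, h2, h3] at this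
    simp at this
    exact hm.ne_zero this
  have hdeg : 0 < d.degree :=
    lt_of_le_of_ne (Polynomial.zero_le_degree_iff.2 hd0)
      (fun h => hu (Polynomial.isUnit_iff_degree_eq_zero.2 h.symm))
  refine hnd d hdeg ((factor_iff_dvd_coords d 𝔮).2 ⟨?_, ?_, ?_, ?_⟩)
  · exact hd ▸ gcd_dvd_left _ _
  · exact hd ▸ (gcd_dvd_right _ _).trans (gcd_dvd_left _ _)
  · exact hd ▸ (gcd_dvd_right _ _).trans ((gcd_dvd_right _ _).trans (gcd_dvd_left _ _))
  · exact hd ▸ (gcd_dvd_right _ _).trans ((gcd_dvd_right _ _).trans (gcd_dvd_right _ _))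

end CoordGcd


/-- **Beck.** Let `A = (α,β/K)` be a division quaternion algebra over a field
`K`.  Every nonzero `𝔭 ∈ A[X]` can be written uniquely as `𝔭 = c·𝔮·p`, where `c ∈ A` is the
leading coefficient of `𝔭`, `p ∈ K[X]` is monic, and `𝔮 ∈ A[X]` is monic and not divisible by
any non-constant polynomial from `K[X]`.  Moreover, writing `𝔭 = p₀ + p₁·i + p₂·j + p₃·k`
with `p₀, p₁, p₂, p₃ ∈ K[X]`, the maximal central factor `p` is the greatest common divisor
of `p₀, p₁, p₂, p₃` in `K[X]`. -/
theorem beck_decomposition {K : Type*} [Field K] (α β : K)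
    (hα : α ≠ 0) (hβ : β ≠ 0)
    (hdiv : ∀ x : ℍ[K,α,β], x ≠ 0 → IsUnit x)
    (𝔭 : Polynomial ℍ[K,α,β]) (h𝔭 : 𝔭 ≠ 0) :
    ∃ (c : ℍ[K,α,β]) (𝔮 : Polynomial ℍ[K,α,β]) (p : K[X]),
      (c = 𝔭.leadingCoeff ∧ 𝔮.Monic ∧ p.Monic ∧
        (∀ f : K[X], 0 < f.degree →
          ¬∃ 𝔥 : Polynomial ℍ[K,α,β], 𝔮 = 𝔥 * f.map (algebraMap K ℍ[K,α,β])) ∧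
        𝔭 = Polynomial.C c * 𝔮 * p.map (algebraMap K ℍ[K,α,β])) ∧
      (∀ (c' : ℍ[K,α,β]) (𝔮' : Polynomial ℍ[K,α,β]) (p' : K[X]),
        𝔮'.Monic → p'.Monic →
        (∀ f : K[X], 0 < f.degree →
          ¬∃ 𝔥 : Polynomial ℍ[K,α,β], 𝔮' = 𝔥 * f.map (algebraMap K ℍ[K,α,β])) →
        𝔭 = Polynomial.C c' * 𝔮' * p'.map (algebraMap K ℍ[K,α,β]) →
        c' = c ∧ 𝔮' = 𝔮 ∧ p' = p) ∧
      ((p ∣ coordPoly (fun x => x.re) 𝔭 ∧ p ∣ coordPoly (fun x => x.imI) 𝔭 ∧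
          p ∣ coordPoly (fun x => x.imJ) 𝔭 ∧ p ∣ coordPoly (fun x => x.imK) 𝔭) ∧
        ∀ g : K[X],
          (g ∣ coordPoly (fun x => x.re) 𝔭 ∧ g ∣ coordPoly (fun x => x.imI) 𝔭 ∧
            g ∣ coordPoly (fun x => x.imJ) 𝔭 ∧ g ∣ coordPoly (fun x => x.imK) 𝔭) →
          g ∣ p) := by
  classical
  haveI : NoZeroDivisors ℍ[K,α,β] := ⟨fun {a b} hab => by
    rcases eq_or_ne a 0 with ha | ha
    · exact Or.inl ha
    · obtain ⟨u, rfl⟩ := hdiv a ha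
      refine Or.inr ?_
      calc b = ↑u⁻¹ * (↑u * b) := by rw [← mul_assoc, Units.inv_mul, one_mul]
        _ = 0 := by rw [hab, mul_zero]⟩
  set P0 := coordPoly (fun x => x.re) 𝔭 with hP0
  set P1 := coordPoly (fun x => x.imI) 𝔭 with hP1
  set P2 := coordPoly (fun x => x.imJ) 𝔭 with hP2
  set P3 := coordPoly (fun x => x.imK) 𝔭 with hP3
  set p : K[X] := gcd P0 (gcd P1 (gcd P2 P3)) with hp
  -- the gcd is nonzero
  have hcoordne : ¬(P0 = 0 ∧ P1 = 0 ∧ P2 = 0 ∧ P3 = 0) := by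
    rintro ⟨h0, h1, h2, h3⟩
    apply h𝔭
    have hrec := reconstruct 𝔭
    rw [← hP0, ← hP1, ← hP2, ← hP3, h0, h1, h2, h3] at hrec
    simpa using hrec
  have hp0 : p ≠ 0 := by
    rw [hp, Ne, gcd_eq_zero_iff, gcd_eq_zero_iff, gcd_eq_zero_iff]
    tauto
  have hpm : p.Monic := by
    have hn : normalize p = p := by rw [hp]; exact normalize_gcd _ _
    have := Polynomial.monic_normalize (p := p) hp0
    rwa [hn] at this
  have hpd0 : p ∣ P0 := hp ▸ gcd_dvd_left _ _
  have hpd1 : p ∣ P1 := hp ▸ (gcd_dvd_right _ _).trans (gcd_dvd_left _ _)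
  have hpd2 : p ∣ P2 := hp ▸ (gcd_dvd_right _ _).trans ((gcd_dvd_right _ _).trans (gcd_dvd_left _ _))
  have hpd3 : p ∣ P3 := hp ▸ (gcd_dvd_right _ _).trans ((gcd_dvd_right _ _).trans (gcd_dvd_right _ _))
  obtain ⟨𝔥, h𝔥⟩ := (factor_iff_dvd_coords p 𝔭).2 ⟨hpd0, hpd1, hpd2, hpd3⟩
  have h𝔥0 : 𝔥 ≠ 0 := by rintro rfl; rw [zero_mul] at h𝔥; exact h𝔭 h𝔥
  have hpmapm : (p.map (algebraMap K ℍ[K,α,β])).Monic := hpm.map _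
  have hlc : 𝔭.leadingCoeff = 𝔥.leadingCoeff := by
    rw [h𝔥, Polynomial.leadingCoeff_mul'
      (by rw [hpmapm.leadingCoeff, mul_one]; exact Polynomial.leadingCoeff_ne_zero.mpr h𝔥0),
      hpmapm.leadingCoeff, mul_one]
  have hc : 𝔭.leadingCoeff ≠ 0 := Polynomial.leadingCoeff_ne_zero.mpr h𝔭
  obtain ⟨u, hu⟩ := hdiv _ hc
  set 𝔮 : Polynomial ℍ[K,α,β] := Polynomial.C (↑u⁻¹ : ℍ[K,α,β]) * 𝔥 with h𝔮
  have h𝔥eq : Polynomial.C 𝔭.leadingCoeff * 𝔮 = 𝔥 := by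
    rw [h𝔮, ← hu, ← mul_assoc, ← Polynomial.C_mul, Units.mul_inv, Polynomial.C_1, one_mul]
  have hqm : 𝔮.Monic := by
    have h1 : (Polynomial.C ((↑u⁻¹ : ℍ[K,α,β]))).leadingCoeff * 𝔥.leadingCoeff = 1 := by
      rw [Polynomial.leadingCoeff_C, ← hlc, ← hu, Units.inv_mul]
    rw [Polynomial.Monic, h𝔮, Polynomial.leadingCoeff_mul' (ne_of_eq_of_ne h1 one_ne_zero), h1]
  have heqn : 𝔭 = Polynomial.C 𝔭.leadingCoeff * 𝔮 * p.map (algebraMap K ℍ[K,α,β]) := by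
    rw [h𝔥eq, ← h𝔥]
  have hqnd : ∀ f : K[X], 0 < f.degree →
      ¬∃ 𝔥' : Polynomial ℍ[K,α,β], 𝔮 = 𝔥' * f.map (algebraMap K ℍ[K,α,β]) := by
    rintro f hf ⟨𝔥', h'⟩
    have h𝔥f : 𝔥 = (Polynomial.C 𝔭.leadingCoeff * 𝔥') * f.map (algebraMap K ℍ[K,α,β]) := by
      rw [← h𝔥eq, h', mul_assoc]
    obtain ⟨hd0, hd1, hd2, hd3⟩ := (factor_iff_dvd_coords f 𝔥).1 ⟨_, h𝔥f⟩
    have e0 : P0 = coordPoly (fun x => x.re) 𝔥 * p := by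
      rw [hP0, h𝔥, coordPoly_mul_map isCoordFn_re]
    have e1 : P1 = coordPoly (fun x => x.imI) 𝔥 * p := by
      rw [hP1, h𝔥, coordPoly_mul_map isCoordFn_imI]
    have e2 : P2 = coordPoly (fun x => x.imJ) 𝔥 * p := by
      rw [hP2, h𝔥, coordPoly_mul_map isCoordFn_imJ]
    have e3 : P3 = coordPoly (fun x => x.imK) 𝔥 * p := by
      rw [hP3, h𝔥, coordPoly_mul_map isCoordFn_imK]
    have d0 : f * p ∣ P0 := by rw [e0]; exact mul_dvd_mul hd0 dvd_rfl
    have d1 : f * p ∣ P1 := by rw [e1]; exact mul_dvd_mul hd1 dvd_rfl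
    have d2 : f * p ∣ P2 := by rw [e2]; exact mul_dvd_mul hd2 dvd_rfl
    have d3 : f * p ∣ P3 := by rw [e3]; exact mul_dvd_mul hd3 dvd_rfl
    have hfp : f * p ∣ p := by
      rw [hp]
      exact dvd_gcd d0 (dvd_gcd d1 (dvd_gcd d2 d3))
    have hf1 : f ∣ 1 := (mul_dvd_mul_iff_right hp0).mp (by rwa [one_mul])
    have := Polynomial.isUnit_iff_degree_eq_zero.mp (isUnit_of_dvd_one hf1)
    exact lt_irrefl _ (this ▸ hf)
  refine ⟨𝔭.leadingCoeff, 𝔮, p, ⟨rfl, hqm, hpm, hqnd, heqn⟩, ?_, ⟨⟨hpd0, hpd1, hpd2, hpd3⟩,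
    fun g hg => by rw [hp]; exact dvd_gcd hg.1 (dvd_gcd hg.2.1 (dvd_gcd hg.2.2.1 hg.2.2.2))⟩⟩
  intro c' 𝔮' p' hq'm hp'm hq'nd heq'
  have hmon : (𝔮' * p'.map (algebraMap K ℍ[K,α,β])).Monic := hq'm.mul (hp'm.map _)
  have hc'0 : c' ≠ 0 := by
    rintro rfl
    rw [Polynomial.C_0, zero_mul, zero_mul] at heq'
    exact h𝔭 heq'
  have hc' : c' = 𝔭.leadingCoeff := by
    rw [heq', mul_assoc, Polynomial.leadingCoeff_mul'
      (by rw [Polynomial.leadingCoeff_C, hmon.leadingCoeff, mul_one]; exact hc'0),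
      Polynomial.leadingCoeff_C, hmon.leadingCoeff, mul_one]
  have hcancel : 𝔮' * p'.map (algebraMap K ℍ[K,α,β]) = 𝔮 * p.map (algebraMap K ℍ[K,α,β]) := by
    have h2 : Polynomial.C (↑u : ℍ[K,α,β]) * (𝔮' * p'.map (algebraMap K ℍ[K,α,β]))
        = Polynomial.C (↑u : ℍ[K,α,β]) * (𝔮 * p.map (algebraMap K ℍ[K,α,β])) := by
      calc Polynomial.C (↑u : ℍ[K,α,β]) * (𝔮' * p'.map (algebraMap K ℍ[K,α,β])) = 𝔭 := by
            rw [hu, ← mul_assoc, ← hc', ← heq']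
        _ = Polynomial.C (↑u : ℍ[K,α,β]) * (𝔮 * p.map (algebraMap K ℍ[K,α,β])) := by
            rw [hu]
            conv_lhs => rw [heqn, mul_assoc]
    exact mul_left_cancel₀ (by
      rw [Ne, Polynomial.C_eq_zero]; rw [hu]; exact hc) h2
  have ecoord : ∀ f : ℍ[K,α,β] → K, IsCoordFn f →
      coordPoly f 𝔮' * p' = coordPoly f 𝔮 * p := fun f hf => by
    rw [← coordPoly_mul_map hf, ← coordPoly_mul_map hf, hcancel]
  have hdu' : IsUnit (gcd (coordPoly (fun x => x.re) 𝔮') (gcd (coordPoly (fun x => x.imI) 𝔮')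
      (gcd (coordPoly (fun x => x.imJ) 𝔮') (coordPoly (fun x => x.imK) 𝔮')))) :=
    coordGcd_isUnit hq'm hq'nd
  have hdu : IsUnit (gcd (coordPoly (fun x => x.re) 𝔮) (gcd (coordPoly (fun x => x.imI) 𝔮)
      (gcd (coordPoly (fun x => x.imJ) 𝔮) (coordPoly (fun x => x.imK) 𝔮)))) :=
    coordGcd_isUnit hqm hqnd
  have hA' : Associated (gcd (coordPoly (fun x => x.re) 𝔮' * p')
      (gcd (coordPoly (fun x => x.imI) 𝔮' * p')
        (gcd (coordPoly (fun x => x.imJ) 𝔮' * p') (coordPoly (fun x => x.imK) 𝔮' * p')))) p' :=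
    (gcd4_mul_right _ _ _ _ _).trans (unit_mul_associated hdu')
  have hA : Associated (gcd (coordPoly (fun x => x.re) 𝔮 * p)
      (gcd (coordPoly (fun x => x.imI) 𝔮 * p)
        (gcd (coordPoly (fun x => x.imJ) 𝔮 * p) (coordPoly (fun x => x.imK) 𝔮 * p)))) p :=
    (gcd4_mul_right _ _ _ _ _).trans (unit_mul_associated hdu)
  rw [ecoord _ isCoordFn_re, ecoord _ isCoordFn_imI, ecoord _ isCoordFn_imJ,
    ecoord _ isCoordFn_imK] at hA'
  have hpp' : p' = p := Polynomial.eq_of_monic_of_associated hp'm hpm (hA'.symm.trans hA)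
  refine ⟨hc', ?_, hpp'⟩
  rw [hpp'] at hcancel
  exact mul_right_cancel₀ hpmapm.ne_zero hcancel
end
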